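/- For a standard bivariate Gaussian pair (g, h) with correlation ρ, the expectation E[max(g,0)·max(h,0)] equals (1/(2π))(√(1-ρ²) + ρ(π - arccos ρ)). -/

import Mathlib

open MeasureTheory ProbabilityTheory Real Set
open scoped NNReal

/-! In polar coordinates the standard Gaussian density on `ℝ²` is `(2π)⁻¹ e^{-r²/2}`, and the
integrand is homogeneous of degree 2, so the integral factors as
`(2π)⁻¹ (∫₀^∞ r³ e^{-r²/2} dr) (∫ F(θ) dθ) = π⁻¹ ∫ F(θ) dθ`. Writing `ρ = cos β` with
`β = arccos ρ`, the second factor is `max (cos (θ - β)) 0`, so `F(θ) = cos θ cos (θ - β)` on the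
arc `(β - π/2, π/2)` where both cosines are positive and `0` elsewhere; integrating gives
`(sin β + (π - β) cos β) / 2`. -/

lemma integral_Ioi_pow_three_mul_exp_neg_sq_div_two :
    ∫ r in Ioi (0 : ℝ), r ^ 3 * exp (-r ^ 2 / 2) = 2 := by
  have h := integral_rpow_mul_exp_neg_mul_rpow (p := 2) (q := 3) (b := 1 / 2)
    (by norm_num) (by norm_num) (by norm_num)
  norm_num [Gamma_two] at h
  refine (setIntegral_congr_fun measurableSet_Ioi fun r _ => ?_).trans h
  ring_nf

lemma integral_gaussianReal_prod_gaussianReal {E : Type*} [NormedAddCommGroup E]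
    [NormedSpace ℝ E] (μ₁ μ₂ : ℝ) {v₁ v₂ : ℝ≥0} (hv₁ : v₁ ≠ 0) (hv₂ : v₂ ≠ 0)
    (f : ℝ × ℝ → E) :
    ∫ p, f p ∂(gaussianReal μ₁ v₁).prod (gaussianReal μ₂ v₂)
      = ∫ p, (gaussianPDFReal μ₁ v₁ p.1 * gaussianPDFReal μ₂ v₂ p.2) • f p := by
  rw [gaussianReal_of_var_ne_zero _ hv₁, gaussianReal_of_var_ne_zero _ hv₂,
    prod_withDensity (measurable_gaussianPDF _ _) (measurable_gaussianPDF _ _),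
    ← Measure.volume_eq_prod, integral_withDensity_eq_integral_toReal_smul (by fun_prop)
      (ae_of_all _ fun _ => ENNReal.mul_lt_top gaussianPDF_lt_top gaussianPDF_lt_top)]
  simp only [ENNReal.toReal_mul, toReal_gaussianPDF]

lemma gaussianPDFReal_zero_one_mul_gaussianPDFReal (x y : ℝ) :
    gaussianPDFReal 0 1 x * gaussianPDFReal 0 1 y = (2 * π)⁻¹ * exp (-(x ^ 2 + y ^ 2) / 2) := by
  have hsqrt : (√(2 * π))⁻¹ * (√(2 * π))⁻¹ = (2 * π)⁻¹ := by
    rw [← mul_inv, mul_self_sqrt (by positivity)]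
  simp only [gaussianPDFReal, NNReal.coe_one, mul_one, sub_zero]
  rw [mul_mul_mul_comm, hsqrt, ← exp_add]
  ring_nf

theorem integral_gaussianReal_prod_of_homogeneous {E : Type*} [NormedAddCommGroup E]
    [NormedSpace ℝ E] {f : ℝ × ℝ → E} (hf : ∀ r : ℝ, 0 < r → ∀ p, f (r • p) = r ^ 2 • f p) :
    ∫ p, f p ∂(gaussianReal 0 1).prod (gaussianReal 0 1)
      = π⁻¹ • ∫ θ in Ioo (-π) π, f (cos θ, sin θ) := by
  rw [integral_gaussianReal_prod_gaussianReal 0 0 one_ne_zero one_ne_zero,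
    ← integral_comp_polarCoord_symm]
  calc ∫ p in polarCoord.target, p.1 • (gaussianPDFReal 0 1 (polarCoord.symm p).1
          * gaussianPDFReal 0 1 (polarCoord.symm p).2) • f (polarCoord.symm p)
      = ∫ p in Ioi 0 ×ˢ Ioo (-π) π,
          (p.1 ^ 3 * exp (-p.1 ^ 2 / 2)) • ((2 * π)⁻¹ • f (cos p.2, sin p.2)) := by
        refine setIntegral_congr_fun (measurableSet_Ioi.prod measurableSet_Ioo) ?_
        rintro ⟨r, θ⟩ ⟨hr, -⟩
        have hpolar : polarCoord.symm (r, θ) = r • (cos θ, sin θ) := by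
          simp [polarCoord_symm_apply]
        dsimp only
        rw [hpolar, hf r hr, gaussianPDFReal_zero_one_mul_gaussianPDFReal]
        simp only [Prod.smul_fst, Prod.smul_snd, smul_eq_mul, smul_smul]
        rw [mul_pow, mul_pow, ← mul_add, cos_sq_add_sin_sq, mul_one]
        ring_nf
    _ = (∫ r in Ioi 0, r ^ 3 * exp (-r ^ 2 / 2))
          • ∫ θ in Ioo (-π) π, (2 * π)⁻¹ • f (cos θ, sin θ) := by
        rw [Measure.volume_eq_prod, ← Measure.prod_restrict]
        exact integral_prod_smul (fun r : ℝ => r ^ 3 * exp (-r ^ 2 / 2))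
          (fun θ : ℝ => (2 * π)⁻¹ • f (cos θ, sin θ))
    _ = π⁻¹ • ∫ θ in Ioo (-π) π, f (cos θ, sin θ) := by
        rw [integral_Ioi_pow_three_mul_exp_neg_sq_div_two, integral_smul, smul_smul]
        congr 1
        field_simp

lemma integral_cos_mul_cos_sub (β a b : ℝ) :
    ∫ θ in a..b, cos θ * cos (θ - β)
      = ((b - a) * cos β + (sin (2 * b - β) - sin (2 * a - β)) / 2) / 2 := by
  have hderiv : ∀ θ ∈ uIcc a b,
      HasDerivAt (fun θ => θ * cos β / 2 + sin (2 * θ - β) / 4) (cos θ * cos (θ - β)) θ := by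
    intro θ _
    have hlin := ((hasDerivAt_id' θ).mul_const (cos β)).div_const 2
    have hsin := ((((hasDerivAt_id' θ).const_mul 2).sub_const β).sin).div_const 4
    refine (hlin.add hsin).congr_deriv ?_
    rw [cos_sub, cos_sub, cos_two_mul, sin_two_mul]
    ring
  have hint : IntervalIntegrable (fun θ => cos θ * cos (θ - β)) volume a b :=
    (by fun_prop : Continuous fun θ => cos θ * cos (θ - β)).intervalIntegrable a b
  rw [intervalIntegral.integral_eq_sub_of_hasDerivAt hderiv hint]
  ring

lemma max_cos_mul_max_cos_sub_eq_indicator {β θ : ℝ} (hβ : β ∈ Icc 0 π)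
    (hθ : θ ∈ Ioo (-π) π) :
    max (cos θ) 0 * max (cos (θ - β)) 0
      = (Ioo (β - π / 2) (π / 2)).indicator (fun θ => cos θ * cos (θ - β)) θ := by
  by_cases hmem : θ ∈ Ioo (β - π / 2) (π / 2)
  · have hcos : 0 < cos θ := cos_pos_of_mem_Ioo ⟨by linarith [hmem.1, hβ.1], hmem.2⟩
    have hcos_sub : 0 < cos (θ - β) :=
      cos_pos_of_mem_Ioo ⟨by linarith [hmem.1], by linarith [hmem.2, hβ.1]⟩
    rw [indicator_of_mem hmem, max_eq_left hcos.le, max_eq_left hcos_sub.le]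
  rw [indicator_of_notMem hmem]
  have hnonpos : cos θ ≤ 0 ∨ cos (θ - β) ≤ 0 := by
    simp only [mem_Ioo, not_and_or, not_lt] at hmem
    rcases hmem with hlow | hhigh
    · by_cases hθ' : θ ≤ -(π / 2)
      · left
        rw [← cos_neg]
        exact cos_nonpos_of_pi_div_two_le_of_le (by linarith) (by linarith [hθ.1])
      · right
        rw [← cos_neg, neg_sub]
        exact cos_nonpos_of_pi_div_two_le_of_le (by linarith) (by linarith [hβ.2])
    · left
      exact cos_nonpos_of_pi_div_two_le_of_le hhigh (by linarith [hθ.2])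
  rcases hnonpos with h | h
  · rw [max_eq_right h, zero_mul]
  · rw [max_eq_right h, mul_zero]

lemma integral_max_cos_mul_max_cos_sub {β : ℝ} (hβ : β ∈ Icc 0 π) :
    ∫ θ in Ioo (-π) π, max (cos θ) 0 * max (cos (θ - β)) 0
      = (sin β + (π - β) * cos β) / 2 := by
  have hsub : Ioo (β - π / 2) (π / 2) ⊆ Ioo (-π) π :=
    Ioo_subset_Ioo (by linarith [hβ.1, pi_pos]) (by linarith [pi_pos])
  rw [setIntegral_congr_fun measurableSet_Ioo
      fun θ hθ => max_cos_mul_max_cos_sub_eq_indicator hβ hθ,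
    setIntegral_indicator measurableSet_Ioo, inter_eq_self_of_subset_right hsub,
    ← integral_Ioc_eq_integral_Ioo, ← intervalIntegral.integral_of_le (by linarith [hβ.2]),
    integral_cos_mul_cos_sub, show 2 * (π / 2) - β = π - β by ring,
    show 2 * (β - π / 2) - β = β - π by ring, sin_pi_sub, sin_sub_pi]
  ring

/-- For a standard bivariate Gaussian pair `(g, h)` with correlation `ρ`, realized as
`(g, h) = (x, ρx + √(1-ρ²)y)` with `x, y` independent standard Gaussians,
`E[max(g,0) max(h,0)] = (1/(2π))(√(1-ρ²) + ρ(π - arccos ρ))`. -/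
theorem relu_bivariate_gaussian_moment (ρ : ℝ) (hρ : ρ ∈ Set.Icc (-1 : ℝ) 1) :
    ∫ p : ℝ × ℝ, max p.1 0 * max (ρ * p.1 + Real.sqrt (1 - ρ ^ 2) * p.2) 0
        ∂((gaussianReal 0 1).prod (gaussianReal 0 1))
      = (1 / (2 * Real.pi)) *
          (Real.sqrt (1 - ρ ^ 2) + ρ * (Real.pi - Real.arccos ρ)) := by
  have hcos : cos (arccos ρ) = ρ := cos_arccos hρ.1 hρ.2
  have hsin : sin (arccos ρ) = √(1 - ρ ^ 2) := sin_arccos ρ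
  have hdir : ∀ θ, ρ * cos θ + √(1 - ρ ^ 2) * sin θ = cos (θ - arccos ρ) := fun θ => by
    rw [cos_sub, hcos, hsin]; ring
  have hhom : ∀ r : ℝ, 0 < r → ∀ p : ℝ × ℝ,
      max (r • p).1 0 * max (ρ * (r • p).1 + √(1 - ρ ^ 2) * (r • p).2) 0
        = r ^ 2 • (max p.1 0 * max (ρ * p.1 + √(1 - ρ ^ 2) * p.2) 0) := by
    intro r hr p
    have hrelu : ∀ a, max (r * a) 0 = r * max a 0 := fun a => by
      rw [mul_max_of_nonneg _ _ hr.le, mul_zero]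
    simp only [Prod.smul_fst, Prod.smul_snd, smul_eq_mul]
    rw [show ρ * (r * p.1) + √(1 - ρ ^ 2) * (r * p.2) = r * (ρ * p.1 + √(1 - ρ ^ 2) * p.2) by ring,
      hrelu, hrelu]
    ring
  rw [integral_gaussianReal_prod_of_homogeneous hhom]
  simp only [hdir]
  rw [integral_max_cos_mul_max_cos_sub ⟨arccos_nonneg ρ, arccos_le_pi ρ⟩, hcos, hsin, smul_eq_mul]
  field_simp
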